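/- (Capacity region of the s-user Multiple Access Adder Channel, via Ulrey's characterization) Let s ≥ 1. For p = (p_1,…,p_s) ∈ [0,1]^s and A ⊆ [s], let h(A,p) = −∑_{k=0}^{|A|} b_A(k,p)·log₂ b_A(k,p), where b_A(k,p) = ∑_{B ⊆ A, |B| = k} ∏_{i∈B} p_i · ∏_{j∈A∖B} (1−p_j) (the entropy of ∑_{i∈A} X_i for independent Bernoulli(p_i) inputs). For each p let P(p) = {R ∈ ℝ^s : R_i ≥ 0 for all i, and ∑_{i∈A} R_i ≤ h(A,p) for all A ⊆ [s]}. Then the closure of the convex hull of ⋃_{p ∈ [0,1]^s} P(p) equals the single polyhedron {R ∈ ℝ^s : R_i ≥ 0 for all i, and ∑_{i∈A} R_i ≤ H_{|A|}(1/2) for all A ⊆ [s]}. -/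

import Mathlib

/-!
Since the target polyhedron is closed and convex, and `p ≡ 1/2` already gives
`h(A, p) = H_{|A|}(1/2)`, everything reduces to `h(A, p) ≤ H_{|A|}(1/2)` on the cube
(Shepp–Olkin). Take a maximiser `q` of `h(A, ·)` on the cube. If some `q i` with `i ∈ A` is `0`
or `1`, then `X i` is deterministic and `h(A, q) = h(A \ {i}, q)`; conclude by induction on `A`
and monotonicity of `n ↦ H_n(1/2)`. Otherwise `q` is a critical point in every coordinate of `A`.
The law of `∑_{j ∈ A} X j` is affine in each `q i`, so comparing the critical-point equations of
two coordinates and using strict log-concavity of that law forces all `q i` to be equal, to `t`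
say. The remaining equation reads `φ_m(t) = 0` for a function `φ_m` (`binomMeanLogRatio`) that is
strictly increasing on `(0, 1)` and vanishes at `1/2`.
-/

open Finset

/-- `b_A(k,p)`: the probability that a sum of independent Bernoulli(`p i`),
`i ∈ A`, random variables equals `k`. -/
noncomputable def pbinOn (s : ℕ) (A : Finset (Fin s)) (p : Fin s → ℝ) (k : ℕ) : ℝ :=
  ∑ B ∈ A.powerset.filter (fun B : Finset (Fin s) => B.card = k),
    (∏ i ∈ B, p i) * ∏ j ∈ A \ B, (1 - p j)

/-- `h(A,p)`: the Shannon entropy (base 2) of `∑_{i ∈ A} X_i` for independent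
Bernoulli(`p i`) inputs, with the convention `0 · log₂ 0 = 0`. -/
noncomputable def hEnt (s : ℕ) (A : Finset (Fin s)) (p : Fin s → ℝ) : ℝ :=
  -∑ k ∈ Finset.range (A.card + 1),
    pbinOn s A p k * Real.logb 2 (pbinOn s A p k)

/-- `H_n(q)`: Shannon entropy of the binomial distribution `B(n,q)`. -/
noncomputable def binomEnt (n : ℕ) (q : ℝ) : ℝ :=
  -∑ k ∈ Finset.range (n + 1),
    ((n.choose k : ℝ) * q ^ k * (1 - q) ^ (n - k)) *
      Real.logb 2 ((n.choose k : ℝ) * q ^ k * (1 - q) ^ (n - k))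

/-- The polyhedron of rate tuples associated with the input distribution `p`. -/
def ratePoly (s : ℕ) (p : Fin s → ℝ) : Set (Fin s → ℝ) :=
  {R | (∀ i, 0 ≤ R i) ∧ ∀ A : Finset (Fin s), ∑ i ∈ A, R i ≤ hEnt s A p}

open Real

def shiftSeq (a : ℕ → ℝ) : ℕ → ℝ
  | 0 => 0
  | k + 1 => a k

/-- The law of `X + B` for `X ∼ a` and an independent `B ∼ Bernoulli q`. -/
def bernoulliConv (q : ℝ) (a : ℕ → ℝ) (k : ℕ) : ℝ :=
  (1 - q) * a k + q * shiftSeq a k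

@[simp] lemma shiftSeq_zero (a : ℕ → ℝ) : shiftSeq a 0 = 0 := rfl

@[simp] lemma shiftSeq_succ (a : ℕ → ℝ) (k : ℕ) : shiftSeq a (k + 1) = a k := rfl

lemma sum_range_succ_shiftSeq (f : ℝ → ℝ) (a : ℕ → ℝ) (N : ℕ) :
    ∑ k ∈ range (N + 1), f (shiftSeq a k) = ∑ k ∈ range N, f (a k) + f 0 := by
  simp [sum_range_succ']

lemma sum_range_succ_shiftSeq_mul (a d : ℕ → ℝ) (N : ℕ) :
    ∑ k ∈ range (N + 1), shiftSeq a k * d k = ∑ k ∈ range N, a k * d (k + 1) := by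
  simp [sum_range_succ']

lemma bernoulliConv_zero_left (a : ℕ → ℝ) : bernoulliConv 0 a = a := by
  funext k; simp [bernoulliConv]

lemma bernoulliConv_one_left (a : ℕ → ℝ) : bernoulliConv 1 a = shiftSeq a := by
  funext k; simp [bernoulliConv]

lemma sum_range_succ_bernoulliConv_mul {r : ℕ → ℝ} {M : ℕ} (hr : r M = 0) (q : ℝ)
    (d : ℕ → ℝ) :
    ∑ k ∈ range (M + 1), bernoulliConv q r k * d k =
      (1 - q) * ∑ k ∈ range M, r k * d k + q * ∑ k ∈ range M, r k * d (k + 1) := by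
  simp only [bernoulliConv, add_mul, sum_add_distrib, mul_assoc, ← mul_sum,
    sum_range_succ_shiftSeq_mul]
  simp [sum_range_succ, hr]

lemma sum_negMulLog_le_sum_negMulLog_bernoulliConv {a : ℕ → ℝ} {N : ℕ}
    (ha : ∀ k, 0 ≤ a k) (hN : a N = 0) {q : ℝ} (hq : q ∈ Set.Icc (0 : ℝ) 1) :
    ∑ k ∈ range (N + 1), negMulLog (a k) ≤
      ∑ k ∈ range (N + 1), negMulLog (bernoulliConv q a k) := by
  have hshift : ∀ k, 0 ≤ shiftSeq a k := by rintro (_ | k) <;> simp [ha]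
  calc ∑ k ∈ range (N + 1), negMulLog (a k)
      = ∑ k ∈ range (N + 1), ((1 - q) * negMulLog (a k) + q * negMulLog (shiftSeq a k)) := by
        rw [sum_add_distrib, ← mul_sum, ← mul_sum,
          sum_range_succ_shiftSeq negMulLog, sum_range_succ _ N, hN]
        simp only [negMulLog_zero]
        ring
    _ ≤ ∑ k ∈ range (N + 1), negMulLog (bernoulliConv q a k) := by
        gcongr with k
        exact concaveOn_negMulLog.2 (ha k) (hshift k) (by linarith [hq.2]) hq.1 (by ring)

lemma mul_lt_sq_of_mix {q x y z w : ℝ} (hq0 : 0 < q) (hq1 : q < 1) (hx : 0 ≤ x) (hy : 0 < y)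
    (hz : 0 < z) (hxz : x * z < y ^ 2) (hyw : y * w ≤ z ^ 2) :
    ((1 - q) * y + q * x) * ((1 - q) * w + q * z) < ((1 - q) * z + q * y) ^ 2 := by
  have hxw : x * w ≤ y * z := by
    by_contra! h
    nlinarith [mul_pos hy hz, mul_pos (mul_pos hy hz) (mul_pos hy hz), mul_nonneg hx hy.le]
  have hexpand : ((1 - q) * z + q * y) ^ 2 - ((1 - q) * y + q * x) * ((1 - q) * w + q * z) =
      (1 - q) ^ 2 * (z ^ 2 - y * w) + q * (1 - q) * (y * z - x * w) + q ^ 2 * (y ^ 2 - x * z) := by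
    ring
  have h1q : 0 < 1 - q := by linarith
  rw [← sub_pos, hexpand]
  have h₁ := mul_nonneg (sq_nonneg (1 - q)) (sub_nonneg.2 hyw)
  have h₂ := mul_nonneg (mul_pos hq0 h1q).le (sub_nonneg.2 hxw)
  have h₃ := mul_pos (pow_pos hq0 2) (sub_pos.2 hxz)
  linarith

lemma bernoulliConv_pos {q : ℝ} (hq : q ∈ Set.Ioo (0 : ℝ) 1) {a : ℕ → ℝ} {n : ℕ}
    (ha : ∀ k, 0 ≤ a k) (hpos : ∀ k ≤ n, 0 < a k) {k : ℕ} (hk : k ≤ n + 1) :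
    0 < bernoulliConv q a k := by
  have h1q : 0 < 1 - q := by linarith [hq.2]
  rcases k with _ | k
  · simpa [bernoulliConv] using mul_pos h1q (hpos 0 (Nat.zero_le n))
  rcases (Nat.lt_succ_iff.1 hk).lt_or_eq with h | h
  · exact add_pos_of_pos_of_nonneg (mul_pos h1q (hpos _ h)) (mul_nonneg hq.1.le (ha k))
  · exact add_pos_of_nonneg_of_pos (mul_nonneg h1q.le (ha _)) (mul_pos hq.1 (hpos k (by omega)))

lemma bernoulliConv_mul_lt_sq {q : ℝ} (hq : q ∈ Set.Ioo (0 : ℝ) 1) {a : ℕ → ℝ} {n : ℕ}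
    (ha : ∀ k, 0 ≤ a k) (hpos : ∀ k ≤ n, 0 < a k) (hzero : ∀ k, n < k → a k = 0)
    (hlc : ∀ k, k + 2 ≤ n → a k * a (k + 2) < a (k + 1) ^ 2) {k : ℕ}
    (hk : k + 2 ≤ n + 1) :
    bernoulliConv q a k * bernoulliConv q a (k + 2) < bernoulliConv q a (k + 1) ^ 2 := by
  have hlc_shift : shiftSeq a k * a (k + 1) < a k ^ 2 := by
    rcases k with _ | k
    · simpa using pow_pos (hpos 0 (Nat.zero_le n)) 2
    · exact hlc k (by omega)
  have hlc_weak : a k * a (k + 2) ≤ a (k + 1) ^ 2 := by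
    rcases le_or_gt (k + 2) n with h | h
    · exact (hlc k h).le
    · simp [hzero _ h, sq_nonneg]
  have hshift : 0 ≤ shiftSeq a k := by rcases k with _ | k <;> simp [ha]
  exact mul_lt_sq_of_mix hq.1 hq.2 hshift (hpos k (by omega)) (hpos (k + 1) (by omega))
    hlc_shift hlc_weak

lemma hasDerivAt_bernoulliConv (a : ℕ → ℝ) (k : ℕ) (x : ℝ) :
    HasDerivAt (fun y => bernoulliConv y a k) (shiftSeq a k - a k) x := by
  have h := (((hasDerivAt_id' x).const_sub 1).mul_const (a k)).add
    ((hasDerivAt_id' x).mul_const (shiftSeq a k))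
  exact h.congr_deriv (by ring)

lemma sum_mul_log_sub_eq_zero_of_isLocalMax {u : ℕ → ℝ} {N : ℕ} (huN : u N = 0) {x : ℝ}
    (hpos : ∀ k ≤ N, 0 < bernoulliConv x u k)
    (hmax : IsLocalMax (fun y => ∑ k ∈ range (N + 1), negMulLog (bernoulliConv y u k)) x) :
    ∑ k ∈ range N, u k * (log (bernoulliConv x u (k + 1)) - log (bernoulliConv x u k)) = 0 := by
  set L : ℕ → ℝ := fun k => log (bernoulliConv x u k)
  have hderiv : HasDerivAt (fun y => ∑ k ∈ range (N + 1), negMulLog (bernoulliConv y u k))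
      (∑ k ∈ range (N + 1), (u k * (L k + 1) - shiftSeq u k * (L k + 1))) x := by
    refine HasDerivAt.fun_sum fun k hk => ?_
    refine ((hasDerivAt_negMulLog (hpos k (Nat.lt_succ_iff.1 (mem_range.1 hk))).ne').comp x
      (hasDerivAt_bernoulliConv u k x)).congr_deriv ?_
    ring
  have h0 := hmax.hasDerivAt_eq_zero hderiv
  rw [sum_sub_distrib, sum_range_succ_shiftSeq_mul, sum_range_succ, huN, zero_mul, add_zero,
    ← sum_sub_distrib] at h0
  rw [← neg_eq_zero, ← h0, ← sum_neg_distrib]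
  exact sum_congr rfl fun k _ => by ring

def binomWeight (n : ℕ) (t : ℝ) (k : ℕ) : ℝ :=
  (n.choose k : ℝ) * t ^ k * (1 - t) ^ (n - k)

lemma binomWeight_succ (n : ℕ) (t : ℝ) :
    binomWeight (n + 1) t = bernoulliConv t (binomWeight n t) := by
  funext k
  rcases k with _ | k
  · simp [binomWeight, bernoulliConv, pow_succ]; ring
  rcases lt_trichotomy k n with h | rfl | h
  · obtain ⟨m, rfl⟩ := Nat.exists_eq_add_of_lt h
    simp only [binomWeight, bernoulliConv, shiftSeq_succ, Nat.choose_succ_succ, Nat.cast_add,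
      show k + m + 1 + 1 - (k + 1) = m + 1 by omega, show k + m + 1 - (k + 1) = m by omega,
      show k + m + 1 - k = m + 1 by omega]
    ring
  · simp [binomWeight, bernoulliConv, pow_succ, mul_comm]
  · simp [binomWeight, bernoulliConv, Nat.choose_eq_zero_of_lt, h, Nat.lt_succ_of_lt h]

lemma binomWeight_of_lt {n k : ℕ} (h : n < k) (t : ℝ) : binomWeight n t k = 0 := by
  simp [binomWeight, Nat.choose_eq_zero_of_lt h]

lemma binomWeight_nonneg (n : ℕ) {t : ℝ} (ht : t ∈ Set.Icc (0 : ℝ) 1) (k : ℕ) :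
    0 ≤ binomWeight n t k := by
  have := ht.1; have := sub_nonneg.2 ht.2
  unfold binomWeight; positivity

lemma binomWeight_pos {n k : ℕ} (hk : k ≤ n) {t : ℝ} (ht : t ∈ Set.Ioo (0 : ℝ) 1) :
    0 < binomWeight n t k := by
  have := ht.1; have := sub_pos.2 ht.2; have := Nat.choose_pos hk
  unfold binomWeight; positivity

lemma sum_binomWeight (n : ℕ) (t : ℝ) : ∑ k ∈ range (n + 1), binomWeight n t k = 1 := by
  have h := add_pow t (1 - t) n
  rw [add_sub_cancel, one_pow] at h
  rw [h]
  exact sum_congr rfl fun k _ => by unfold binomWeight; ring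

lemma succ_mul_binomWeight_mul_one_sub (n : ℕ) (t : ℝ) {k : ℕ} (hk : k ≤ n) :
    (n + 1) * binomWeight n t k * (1 - t) = ((n : ℝ) + 1 - k) * binomWeight (n + 1) t k := by
  have h : ((n.choose k * (n + 1) : ℕ) : ℝ) = ((n + 1).choose k * (n + 1 - k) : ℕ) :=
    congrArg _ (Nat.choose_mul_succ_eq n k)
  rw [Nat.cast_mul, Nat.cast_mul, Nat.cast_sub (by omega)] at h
  simp only [binomWeight, Nat.succ_sub hk, pow_succ]
  push_cast at h ⊢
  linear_combination (t ^ k * (1 - t) ^ (n - k) * (1 - t)) * h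

lemma succ_mul_binomWeight_mul_self (n k : ℕ) (t : ℝ) :
    (n + 1) * binomWeight n t k * t = ((k : ℝ) + 1) * binomWeight (n + 1) t (k + 1) := by
  have h : (((n + 1) * n.choose k : ℕ) : ℝ) = ((n + 1).choose (k + 1) * (k + 1) : ℕ) :=
    congrArg _ (Nat.add_one_mul_choose_eq n k)
  simp only [binomWeight, Nat.add_sub_add_right, pow_succ]
  push_cast at h ⊢
  linear_combination (t ^ k * (1 - t) ^ (n - k) * t) * h

lemma binomWeight_eq_eval (n : ℕ) (t : ℝ) (k : ℕ) :
    binomWeight n t k = (bernsteinPolynomial ℝ n k).eval t := by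
  simp [binomWeight, bernsteinPolynomial]

lemma hasDerivAt_binomWeight_succ (n k : ℕ) (t : ℝ) :
    HasDerivAt (fun t => binomWeight (n + 1) t k)
      ((n + 1) * (shiftSeq (binomWeight n t) k - binomWeight n t k)) t := by
  simp only [binomWeight_eq_eval]
  refine ((bernsteinPolynomial ℝ (n + 1) k).hasDerivAt t).congr_deriv ?_
  rcases k with _ | k
  · simp [bernsteinPolynomial.derivative_zero]
    ring
  · simp [bernsteinPolynomial.derivative_succ, binomWeight_eq_eval]

lemma hasDerivAt_sum_binomWeight_mul (n : ℕ) (g : ℕ → ℝ) (t : ℝ) :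
    HasDerivAt (fun t => ∑ k ∈ range (n + 2), binomWeight (n + 1) t k * g k)
      ((n + 1) * ∑ k ∈ range (n + 1), binomWeight n t k * (g (k + 1) - g k)) t := by
  refine (HasDerivAt.fun_sum fun k _ =>
    (hasDerivAt_binomWeight_succ n k t).mul_const (g k)).congr_deriv ?_
  simp only [mul_assoc, ← mul_sum, sub_mul, sum_sub_distrib, sum_range_succ_shiftSeq_mul,
    mul_sub]
  rw [sum_range_succ _ (n + 1), binomWeight_of_lt (Nat.lt_succ_self n)]
  ring

noncomputable def hEntNat (s : ℕ) (A : Finset (Fin s)) (p : Fin s → ℝ) : ℝ :=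
  ∑ k ∈ range (A.card + 1), negMulLog (pbinOn s A p k)

noncomputable def binomEntNat (n : ℕ) (t : ℝ) : ℝ :=
  ∑ k ∈ range (n + 1), negMulLog (binomWeight n t k)

lemma neg_sum_mul_logb_eq_sum_negMulLog_div {ι : Type*} (S : Finset ι) (f : ι → ℝ) :
    -∑ k ∈ S, f k * logb 2 (f k) = (∑ k ∈ S, negMulLog (f k)) / log 2 := by
  simp only [negMulLog, logb, sum_div, ← sum_neg_distrib]
  exact sum_congr rfl fun k _ => by ring

lemma hEnt_eq_hEntNat_div (s : ℕ) (A : Finset (Fin s)) (p : Fin s → ℝ) :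
    hEnt s A p = hEntNat s A p / log 2 :=
  neg_sum_mul_logb_eq_sum_negMulLog_div _ _

lemma binomEnt_eq_binomEntNat_div (n : ℕ) (t : ℝ) : binomEnt n t = binomEntNat n t / log 2 :=
  neg_sum_mul_logb_eq_sum_negMulLog_div _ _

lemma binomEntNat_le_succ (n : ℕ) {t : ℝ} (ht : t ∈ Set.Icc (0 : ℝ) 1) :
    binomEntNat n t ≤ binomEntNat (n + 1) t := by
  have h := sum_negMulLog_le_sum_negMulLog_bernoulliConv (binomWeight_nonneg n ht)
    (binomWeight_of_lt (Nat.lt_succ_self n) t) ht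
  rwa [sum_range_succ _ (n + 1), binomWeight_of_lt (Nat.lt_succ_self n), negMulLog_zero,
    add_zero, ← binomWeight_succ] at h

section PoissonBinomial

variable {s : ℕ} {A : Finset (Fin s)} {p : Fin s → ℝ}

open Polynomial in
lemma pbinOn_eq_coeff (k : ℕ) :
    pbinOn s A p k = (∏ i ∈ A, (C (p i) * X + C (1 - p i))).coeff k := by
  rw [prod_add, finsetSum_coeff, pbinOn, sum_filter]
  refine sum_congr rfl fun B _ => ?_
  rw [prod_mul_distrib, prod_const, ← map_prod, ← map_prod, mul_right_comm, ← map_mul,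
    coeff_C_mul_X_pow]
  simp only [eq_comm]

open Polynomial in
lemma pbinOn_insert {i : Fin s} (hi : i ∉ A) :
    pbinOn s (insert i A) p = bernoulliConv (p i) (pbinOn s A p) := by
  funext k
  rcases k with _ | k <;>
    simp only [pbinOn_eq_coeff, prod_insert hi, bernoulliConv, add_mul, coeff_add, mul_assoc,
      coeff_C_mul, coeff_X_mul, coeff_X_mul_zero, shiftSeq_zero, shiftSeq_succ] <;> ring

lemma pbinOn_of_card_lt {k : ℕ} (hk : A.card < k) : pbinOn s A p k = 0 := by
  refine sum_eq_zero fun B hB => ?_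
  rw [mem_filter, mem_powerset] at hB
  exact absurd (card_le_card hB.1) (by omega)

lemma pbinOn_nonneg (hp : ∀ i ∈ A, p i ∈ Set.Icc (0 : ℝ) 1) (k : ℕ) :
    0 ≤ pbinOn s A p k := by
  refine sum_nonneg fun B hB => ?_
  rw [mem_filter, mem_powerset] at hB
  exact mul_nonneg (prod_nonneg fun i hi => (hp i (hB.1 hi)).1)
    (prod_nonneg fun j hj => sub_nonneg.2 (hp j (mem_sdiff.1 hj).1).2)

lemma pbinOn_pos (hp : ∀ i ∈ A, p i ∈ Set.Ioo (0 : ℝ) 1) {k : ℕ} (hk : k ≤ A.card) :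
    0 < pbinOn s A p k := by
  induction A using Finset.induction_on generalizing k with
  | empty => simp [Nat.le_zero.1 hk, pbinOn_eq_coeff]
  | insert i A hi ih =>
    have hpA : ∀ j ∈ A, p j ∈ Set.Ioo (0 : ℝ) 1 := fun j hj => hp j (mem_insert_of_mem hj)
    rw [card_insert_of_notMem hi] at hk
    rw [pbinOn_insert hi]
    exact bernoulliConv_pos (hp i (mem_insert_self i A))
      (pbinOn_nonneg fun j hj => Set.Ioo_subset_Icc_self (hpA j hj)) (fun _ => ih hpA) hk

lemma pbinOn_mul_lt_sq (hp : ∀ i ∈ A, p i ∈ Set.Ioo (0 : ℝ) 1) {k : ℕ}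
    (hk : k + 2 ≤ A.card) :
    pbinOn s A p k * pbinOn s A p (k + 2) < pbinOn s A p (k + 1) ^ 2 := by
  induction A using Finset.induction_on generalizing k with
  | empty => simp at hk
  | insert i A hi ih =>
    have hpA : ∀ j ∈ A, p j ∈ Set.Ioo (0 : ℝ) 1 := fun j hj => hp j (mem_insert_of_mem hj)
    rw [card_insert_of_notMem hi] at hk
    rw [pbinOn_insert hi]
    exact bernoulliConv_mul_lt_sq (hp i (mem_insert_self i A))
      (pbinOn_nonneg fun j hj => Set.Ioo_subset_Icc_self (hpA j hj)) (fun _ => pbinOn_pos hpA)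
      (fun _ => pbinOn_of_card_lt) (fun _ => ih hpA) hk

lemma pbinOn_erase {i : Fin s} (hi : i ∈ A) :
    pbinOn s A p = bernoulliConv (p i) (pbinOn s (A.erase i) p) := by
  conv_lhs => rw [← insert_erase hi]
  exact pbinOn_insert (notMem_erase i A)

lemma pbinOn_congr {p' : Fin s → ℝ} (h : ∀ i ∈ A, p i = p' i) :
    pbinOn s A p = pbinOn s A p' := by
  funext k
  simp only [pbinOn_eq_coeff]
  rw [prod_congr rfl fun i hi => by rw [h i hi]]

lemma pbinOn_update {i : Fin s} (hi : i ∈ A) (x : ℝ) :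
    pbinOn s A (Function.update p i x) = bernoulliConv x (pbinOn s (A.erase i) p) := by
  rw [pbinOn_erase hi, Function.update_self,
    pbinOn_congr fun j hj => Function.update_of_ne (ne_of_mem_erase hj) x p]

lemma pbinOn_of_const {t : ℝ} (h : ∀ i ∈ A, p i = t) :
    pbinOn s A p = binomWeight A.card t := by
  induction A using Finset.induction_on with
  | empty =>
    funext k
    rcases k with _ | k <;> simp [pbinOn_eq_coeff, binomWeight, Polynomial.coeff_one]
  | insert i A hi ih =>
    rw [pbinOn_insert hi, card_insert_of_notMem hi, binomWeight_succ, h i (mem_insert_self i A),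
      ih fun j hj => h j (mem_insert_of_mem hj)]

variable (A) in
lemma continuous_pbinOn (k : ℕ) : Continuous fun p => pbinOn s A p k := by
  unfold pbinOn
  fun_prop

lemma hEntNat_of_const {t : ℝ} (h : ∀ i ∈ A, p i = t) :
    hEntNat s A p = binomEntNat A.card t := by
  rw [hEntNat, binomEntNat, pbinOn_of_const h]

lemma hEntNat_erase_of_eq_zero_or_one {i : Fin s} (hi : i ∈ A) (h : p i = 0 ∨ p i = 1) :
    hEntNat s A p = hEntNat s (A.erase i) p := by
  rw [hEntNat, hEntNat, pbinOn_erase hi, ← card_erase_add_one hi]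
  rcases h with h | h
  · rw [h, bernoulliConv_zero_left, sum_range_succ, pbinOn_of_card_lt (Nat.lt_succ_self _)]
    simp
  · rw [h, bernoulliConv_one_left, sum_range_succ_shiftSeq]
    simp

variable (A) in
lemma continuous_hEntNat : Continuous (hEntNat s A) :=
  continuous_finsetSum _ fun k _ => continuous_negMulLog.comp (continuous_pbinOn A k)

end PoissonBinomial

lemma mul_log_add_one_sub_log_le {a : ℝ} (ha : 0 < a) : a * (log (a + 1) - log a) ≤ 1 := by
  have h := log_le_sub_one_of_pos (div_pos (by linarith : 0 < a + 1) ha)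
  rw [log_div (by linarith) ha.ne'] at h
  calc a * (log (a + 1) - log a) ≤ a * ((a + 1) / a - 1) := by gcongr
    _ = 1 := by field_simp; ring

/-- `log (choose (m + 1) (k + 1) / choose (m + 1) k)` -/
noncomputable def logChooseRatio (m k : ℕ) : ℝ := log ((m : ℝ) + 1 - k) - log ((k : ℝ) + 1)

/-- Up to the factor `-(m + 1)`, the derivative of `t ↦ H(Binom(m + 1, t))`. -/
noncomputable def binomMeanLogRatio (m : ℕ) (t : ℝ) : ℝ :=
  log t - log (1 - t) + ∑ k ∈ range (m + 1), binomWeight m t k * logChooseRatio m k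

lemma log_binomWeight_succ_sub (m : ℕ) {t : ℝ} (ht : t ∈ Set.Ioo (0 : ℝ) 1) {k : ℕ}
    (hk : k ≤ m) :
    log (binomWeight (m + 1) t (k + 1)) - log (binomWeight (m + 1) t k) =
      log t - log (1 - t) + logChooseRatio m k := by
  have h1t : 0 < 1 - t := sub_pos.2 ht.2
  have hk' : (0 : ℝ) < m + 1 - k := by
    have : (k : ℝ) ≤ m := by exact_mod_cast hk
    linarith
  have hb0 := binomWeight_pos (Nat.le_succ_of_le hk) ht
  have hb1 := binomWeight_pos (Nat.succ_le_succ hk) ht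
  have h : ((k : ℝ) + 1) * binomWeight (m + 1) t (k + 1) * (1 - t) =
      ((m : ℝ) + 1 - k) * binomWeight (m + 1) t k * t := by
    linear_combination (1 - t) * (succ_mul_binomWeight_mul_self m k t).symm +
      t * succ_mul_binomWeight_mul_one_sub m t hk
  have hlog := congrArg log h
  rw [log_mul (by positivity) h1t.ne', log_mul (by positivity) hb1.ne',
    log_mul (by positivity) ht.1.ne', log_mul hk'.ne' hb0.ne'] at hlog
  rw [logChooseRatio]
  linarith

lemma sum_binomWeight_mul_log_sub (m : ℕ) {t : ℝ} (ht : t ∈ Set.Ioo (0 : ℝ) 1) :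
    ∑ k ∈ range (m + 1), binomWeight m t k *
      (log (binomWeight (m + 1) t (k + 1)) - log (binomWeight (m + 1) t k)) =
      binomMeanLogRatio m t := by
  rw [sum_congr rfl fun k hk => by
    rw [log_binomWeight_succ_sub m ht (Nat.lt_succ_iff.1 (mem_range.1 hk))],
    binomMeanLogRatio]
  simp only [mul_add, sum_add_distrib, ← sum_mul, sum_binomWeight, one_mul]

lemma binomMeanLogRatio_half (m : ℕ) : binomMeanLogRatio m (1 / 2) = 0 := by
  set f : ℕ → ℝ := fun k => binomWeight m (1 / 2) k * logChooseRatio m k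
  have hanti : ∀ k ∈ range (m + 1), f (m + 1 - 1 - k) = -f k := by
    intro k hk
    have hk : k ≤ m := Nat.lt_succ_iff.1 (mem_range.1 hk)
    simp only [f, binomWeight, logChooseRatio, Nat.add_sub_cancel, Nat.choose_symm hk,
      Nat.sub_sub_self hk, Nat.cast_sub hk]
    ring_nf
  have hsum := sum_range_reflect f (m + 1)
  rw [sum_congr rfl hanti, sum_neg_distrib] at hsum
  rw [binomMeanLogRatio, show (1 : ℝ) - 1 / 2 = 1 / 2 by norm_num, sub_self, zero_add]
  linarith

lemma hasDerivAt_binomMeanLogRatio_succ (n : ℕ) {t : ℝ} (ht : t ∈ Set.Ioo (0 : ℝ) 1) :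
    HasDerivAt (binomMeanLogRatio (n + 1)) (t⁻¹ + (1 - t)⁻¹ + (n + 1) *
      ∑ k ∈ range (n + 1), binomWeight n t k *
        (logChooseRatio (n + 1) (k + 1) - logChooseRatio (n + 1) k)) t := by
  have hlog1 : HasDerivAt (fun t => log (1 - t)) (-(1 - t)⁻¹) t := by
    refine ((hasDerivAt_log (sub_pos.2 ht.2).ne').comp t
      ((hasDerivAt_id' t).const_sub 1)).congr_deriv ?_
    ring
  refine (((hasDerivAt_log ht.1.ne').sub hlog1).add
    (hasDerivAt_sum_binomWeight_mul n _ t)).congr_deriv ?_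
  ring

lemma binomWeight_mul_logChooseRatio_sub_ge (n : ℕ) {t : ℝ} (ht : t ∈ Set.Ioo (0 : ℝ) 1)
    {k : ℕ} (hk : k ≤ n) :
    -(t * binomWeight (n + 1) t k + (1 - t) * binomWeight (n + 1) t (k + 1)) ≤
      t * (1 - t) * (n + 1) *
        (binomWeight n t k * (logChooseRatio (n + 1) (k + 1) - logChooseRatio (n + 1) k)) := by
  have ha : (0 : ℝ) < n + 1 - k := by
    have : (k : ℝ) ≤ n := by exact_mod_cast hk
    linarith
  set X := log ((n : ℝ) + 1 - k + 1) - log ((n : ℝ) + 1 - k)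
  set Y := log ((k : ℝ) + 1 + 1) - log ((k : ℝ) + 1)
  have hX : ((n : ℝ) + 1 - k) * X ≤ 1 := mul_log_add_one_sub_log_le ha
  have hY : ((k : ℝ) + 1) * Y ≤ 1 := mul_log_add_one_sub_log_le (by positivity)
  have hdiff : logChooseRatio (n + 1) (k + 1) - logChooseRatio (n + 1) k = -X - Y := by
    simp only [logChooseRatio, X, Y]
    push_cast
    ring_nf
  have e1 := succ_mul_binomWeight_mul_one_sub n t hk
  have e2 := succ_mul_binomWeight_mul_self n k t
  have hb0 := binomWeight_nonneg (n + 1) (Set.Ioo_subset_Icc_self ht) k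
  have hb1 := binomWeight_nonneg (n + 1) (Set.Ioo_subset_Icc_self ht) (k + 1)
  have h1t := sub_pos.2 ht.2
  have hrw : t * (1 - t) * (n + 1) * (binomWeight n t k * (-X - Y)) =
      -(t * binomWeight (n + 1) t k * ((n + 1 - k) * X) +
        (1 - t) * binomWeight (n + 1) t (k + 1) * ((k + 1) * Y)) := by
    linear_combination (-(t * X)) * e1 - ((1 - t) * Y) * e2
  rw [hdiff, hrw, neg_le_neg_iff]
  nlinarith [mul_le_mul_of_nonneg_left hX (mul_nonneg ht.1.le hb0),
    mul_le_mul_of_nonneg_left hY (mul_nonneg h1t.le hb1)]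

lemma binomMeanLogRatio_strictMonoOn (m : ℕ) :
    StrictMonoOn (binomMeanLogRatio m) (Set.Ioo 0 1) := by
  rcases m with _ | n
  · intro a ha b hb hab
    simp only [binomMeanLogRatio, logChooseRatio, binomWeight, zero_add, range_one,
      sum_singleton, Nat.cast_zero, sub_zero, sub_self, mul_zero, add_zero]
    have := log_lt_log ha.1 hab
    have := log_lt_log (sub_pos.2 hb.2) (sub_lt_sub_left hab (1 : ℝ))
    linarith
  refine strictMonoOn_of_hasDerivWithinAt_pos (convex_Ioo (0 : ℝ) 1)
    (fun t ht => (hasDerivAt_binomMeanLogRatio_succ n ht).continuousAt.continuousWithinAt)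
    (fun t ht =>
      (hasDerivAt_binomMeanLogRatio_succ n (by rwa [interior_Ioo] at ht)).hasDerivWithinAt)
    fun t ht => ?_
  rw [interior_Ioo] at ht
  have h1t := sub_pos.2 ht.2
  have hend : ∑ k ∈ range (n + 1), (t * binomWeight (n + 1) t k +
      (1 - t) * binomWeight (n + 1) t (k + 1)) =
      t * (1 - t ^ (n + 1)) + (1 - t) * (1 - (1 - t) ^ (n + 1)) := by
    have h₁ := sum_binomWeight (n + 1) t
    have h₂ := sum_binomWeight (n + 1) t
    rw [sum_range_succ] at h₁
    rw [sum_range_succ'] at h₂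
    simp only [binomWeight, Nat.choose_self, Nat.sub_self, Nat.choose_zero_right, Nat.sub_zero,
      Nat.cast_one, pow_zero, one_mul, mul_one] at h₁ h₂
    simp only [sum_add_distrib, ← mul_sum, binomWeight]
    linear_combination t * h₁ + (1 - t) * h₂
  have hlower := sum_le_sum (s := range (n + 1)) fun k hk =>
    binomWeight_mul_logChooseRatio_sub_ge n ht (Nat.lt_succ_iff.1 (mem_range.1 hk))
  rw [sum_neg_distrib, hend, ← mul_sum] at hlower
  have e : t * (1 - t) * (t⁻¹ + (1 - t)⁻¹) = 1 := by
    field_simp [ht.1.ne', h1t.ne']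
    ring
  have hpos : 0 < t * t ^ (n + 1) + (1 - t) * (1 - t) ^ (n + 1) :=
    add_pos (mul_pos ht.1 (pow_pos ht.1 _)) (mul_pos h1t (pow_pos h1t _))
  refine pos_of_mul_pos_right (a := t * (1 - t)) ?_ (mul_pos ht.1 h1t).le
  rw [mul_add, e, ← mul_assoc]
  linarith

lemma eq_half_of_binomMeanLogRatio_eq_zero {m : ℕ} {t : ℝ} (ht : t ∈ Set.Ioo (0 : ℝ) 1)
    (h : binomMeanLogRatio m t = 0) : t = 1 / 2 :=
  (binomMeanLogRatio_strictMonoOn m).injOn ht ⟨by norm_num, by norm_num⟩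
    (h.trans (binomMeanLogRatio_half m).symm)

section Maximizer

variable {s : ℕ} {A : Finset (Fin s)} {q : Fin s → ℝ}

lemma sum_pbinOn_erase_mul_log_sub_eq_zero {i : Fin s} (hi : i ∈ A) (hq : q ∈ Set.Icc 0 1)
    (hint : ∀ j ∈ A, q j ∈ Set.Ioo (0 : ℝ) 1)
    (hmax : IsMaxOn (hEntNat s A) (Set.Icc 0 1) q) :
    ∑ k ∈ range A.card, pbinOn s (A.erase i) q k *
      (log (pbinOn s A q (k + 1)) - log (pbinOn s A q k)) = 0 := by
  rw [pbinOn_erase hi]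
  refine sum_mul_log_sub_eq_zero_of_isLocalMax (pbinOn_of_card_lt (card_erase_lt_of_mem hi))
    (fun k hk => pbinOn_erase hi ▸ pbinOn_pos hint hk) ?_
  filter_upwards [Icc_mem_nhds (hint i hi).1 (hint i hi).2] with x hx
  have hline : ∀ y, hEntNat s A (Function.update q i y) =
      ∑ k ∈ range (A.card + 1), negMulLog (bernoulliConv y (pbinOn s (A.erase i) q) k) := by
    intro y; rw [hEntNat, pbinOn_update hi]
  rw [← hline, ← hline, Function.update_eq_self]
  exact hmax ⟨le_update_iff.2 ⟨hx.1, fun j _ => hq.1 j⟩,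
    update_le_iff.2 ⟨hx.2, fun j _ => hq.2 j⟩⟩

lemma log_sub_log_lt_of_mul_lt_sq {a b c : ℝ} (ha : 0 < a) (hc : 0 < c)
    (h : a * c < b ^ 2) : log c - log b < log b - log a := by
  have := log_lt_log (mul_pos ha hc) h
  rw [log_mul ha.ne' hc.ne', log_pow] at this
  push_cast at this
  linarith

lemma eq_of_isMaxOn_of_mem_Ioo (hq : q ∈ Set.Icc 0 1)
    (hint : ∀ j ∈ A, q j ∈ Set.Ioo (0 : ℝ) 1) (hmax : IsMaxOn (hEntNat s A) (Set.Icc 0 1) q)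
    {i j : Fin s} (hi : i ∈ A) (hj : j ∈ A) :
    q i = q j := by
  by_contra hne
  have hij : i ≠ j := fun h => hne (h ▸ rfl)
  have hji' : j ∈ A.erase i := mem_erase.2 ⟨hij.symm, hj⟩
  have hij' : i ∈ A.erase j := mem_erase.2 ⟨hij, hi⟩
  obtain ⟨M, hM⟩ : ∃ M, A.card = M + 1 + 1 :=
    ⟨A.card - 2, by have := one_lt_card.2 ⟨i, hi, j, hj, hij⟩; omega⟩
  set r := pbinOn s ((A.erase i).erase j) q
  have hrcard : ((A.erase i).erase j).card = M := by
    rw [card_erase_of_mem hji', card_erase_of_mem hi, hM]; rfl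
  set d : ℕ → ℝ := fun k => log (pbinOn s A q (k + 1)) - log (pbinOn s A q k)
  set S₀ := ∑ k ∈ range (M + 1), r k * d k
  set S₁ := ∑ k ∈ range (M + 1), r k * d (k + 1)
  have hr : r (M + 1) = 0 := pbinOn_of_card_lt (by omega)
  have hstat_i : (1 - q j) * S₀ + q j * S₁ = 0 := by
    have := sum_pbinOn_erase_mul_log_sub_eq_zero hi hq hint hmax
    rwa [hM, pbinOn_erase hji', sum_range_succ_bernoulliConv_mul hr] at this
  have hstat_j : (1 - q i) * S₀ + q i * S₁ = 0 := by
    have := sum_pbinOn_erase_mul_log_sub_eq_zero hj hq hint hmax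
    rwa [hM, pbinOn_erase hij', erase_right_comm, sum_range_succ_bernoulliConv_mul hr] at this
  have hS : S₁ - S₀ < 0 := by
    rw [← sum_sub_distrib]
    refine sum_neg (fun k hk => ?_) (nonempty_range_iff.2 M.succ_ne_zero)
    have hk : k ≤ M := Nat.lt_succ_iff.1 (mem_range.1 hk)
    have hrk : 0 < r k :=
      pbinOn_pos (fun x hx => hint x (mem_of_mem_erase (mem_of_mem_erase hx))) (hrcard ▸ hk)
    rw [← mul_sub]
    refine mul_neg_of_pos_of_neg hrk (sub_neg.2 ?_)
    exact log_sub_log_lt_of_mul_lt_sq (pbinOn_pos hint (by omega)) (pbinOn_pos hint (by omega))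
      (pbinOn_mul_lt_sq hint (by omega))
  have : (q i - q j) * (S₁ - S₀) = 0 := by linear_combination hstat_j - hstat_i
  rcases mul_eq_zero.1 this with h | h
  · exact hne (sub_eq_zero.1 h)
  · exact hS.ne h

lemma eq_half_of_isMaxOn_of_mem_Ioo (hq : q ∈ Set.Icc 0 1)
    (hint : ∀ j ∈ A, q j ∈ Set.Ioo (0 : ℝ) 1) (hmax : IsMaxOn (hEntNat s A) (Set.Icc 0 1) q)
    {i : Fin s} (hi : i ∈ A) : q i = 1 / 2 := by
  have hconst : ∀ j ∈ A, q j = q i := fun j hj => eq_of_isMaxOn_of_mem_Ioo hq hint hmax hj hi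
  have hstat := sum_pbinOn_erase_mul_log_sub_eq_zero hi hq hint hmax
  rw [pbinOn_of_const hconst, pbinOn_of_const fun j hj => hconst j (mem_of_mem_erase hj),
    card_erase_of_mem hi, ← Nat.sub_add_cancel (card_pos.2 ⟨i, hi⟩), Nat.add_sub_cancel,
    sum_binomWeight_mul_log_sub _ (hint i hi)] at hstat
  exact eq_half_of_binomMeanLogRatio_eq_zero (hint i hi) hstat

lemma hEntNat_le_binomEntNat_half (A : Finset (Fin s)) {p : Fin s → ℝ}
    (hp : p ∈ Set.Icc 0 1) :
    hEntNat s A p ≤ binomEntNat A.card (1 / 2) := by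
  induction A using Finset.strongInduction generalizing p with
  | H A ih =>
    obtain ⟨q, hq, hmax⟩ := isCompact_Icc.exists_isMaxOn (Set.nonempty_Icc.2 zero_le_one)
      (continuous_hEntNat A).continuousOn
    refine (hmax hp).trans ?_
    by_cases hbd : ∃ i ∈ A, q i = 0 ∨ q i = 1
    · obtain ⟨i, hi, hqi⟩ := hbd
      rw [hEntNat_erase_of_eq_zero_or_one hi hqi, ← card_erase_add_one hi]
      exact (ih _ (erase_ssubset hi) hq).trans
        (binomEntNat_le_succ _ ⟨by norm_num, by norm_num⟩)
    · push Not at hbd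
      have hint : ∀ j ∈ A, q j ∈ Set.Ioo (0 : ℝ) 1 := fun j hj =>
        ⟨(hq.1 j).lt_of_ne' (hbd j hj).1, (hq.2 j).lt_of_ne (hbd j hj).2⟩
      rw [hEntNat_of_const fun j hj => eq_half_of_isMaxOn_of_mem_Ioo hq hint hmax hj]

end Maximizer

lemma hEnt_le_binomEnt_half {s : ℕ} (A : Finset (Fin s)) {p : Fin s → ℝ}
    (hp : ∀ i, p i ∈ Set.Icc (0 : ℝ) 1) : hEnt s A p ≤ binomEnt A.card (1 / 2) := by
  rw [hEnt_eq_hEntNat_div, binomEnt_eq_binomEntNat_div]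
  exact div_le_div_of_nonneg_right
    (hEntNat_le_binomEntNat_half A ⟨fun i => (hp i).1, fun i => (hp i).2⟩)
    (log_nonneg one_le_two)

lemma hEnt_const_half {s : ℕ} (A : Finset (Fin s)) :
    hEnt s A (fun _ => 1 / 2) = binomEnt A.card (1 / 2) := by
  rw [hEnt_eq_hEntNat_div, binomEnt_eq_binomEntNat_div, hEntNat_of_const fun _ _ => rfl]

def rateRegion {ι : Type*} (c : Finset ι → ℝ) : Set (ι → ℝ) :=
  {R | (∀ i, 0 ≤ R i) ∧ ∀ A : Finset ι, ∑ i ∈ A, R i ≤ c A}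

section RateRegion

variable {ι : Type*}

lemma rateRegion_mono {c c' : Finset ι → ℝ} (h : ∀ A, c A ≤ c' A) :
    rateRegion c ⊆ rateRegion c' :=
  fun _ hR => ⟨hR.1, fun A => (hR.2 A).trans (h A)⟩

lemma rateRegion_eq_iInter (c : Finset ι → ℝ) :
    rateRegion c = (⋂ i, {R | 0 ≤ R i}) ∩ ⋂ A, {R | ∑ i ∈ A, R i ≤ c A} := by
  ext R
  simp [rateRegion]

lemma isClosed_rateRegion (c : Finset ι → ℝ) : IsClosed (rateRegion c) := by
  rw [rateRegion_eq_iInter]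
  exact (isClosed_iInter fun i => isClosed_le continuous_const (continuous_apply i)).inter
    (isClosed_iInter fun A => isClosed_le (by fun_prop) continuous_const)

lemma convex_rateRegion (c : Finset ι → ℝ) : Convex ℝ (rateRegion c) := by
  rw [rateRegion_eq_iInter]
  exact (convex_iInter fun i => convex_halfSpace_ge (LinearMap.proj i).isLinear 0).inter
    (convex_iInter fun A => convex_halfSpace_le
      ⟨fun x y => by simp [sum_add_distrib], fun a x => by simp [mul_sum]⟩ (c A))

end RateRegion

theorem capacity_region_adder_channel_general (s : ℕ) :
    closure (convexHull ℝ
        (⋃ p ∈ {p : Fin s → ℝ | ∀ i, p i ∈ Set.Icc (0 : ℝ) 1}, ratePoly s p)) =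
      {R : Fin s → ℝ | (∀ i, 0 ≤ R i) ∧
        ∀ A : Finset (Fin s), ∑ i ∈ A, R i ≤ binomEnt A.card (1 / 2)} := by
  change _ = rateRegion fun A => binomEnt A.card (1 / 2)
  apply Set.Subset.antisymm
  · refine closure_minimal (convexHull_min (Set.iUnion₂_subset fun p hp => ?_)
      (convex_rateRegion _)) (isClosed_rateRegion _)
    exact rateRegion_mono fun A => hEnt_le_binomEnt_half A hp
  · have hhalf :
        rateRegion (fun A => binomEnt A.card (1 / 2)) = ratePoly s fun _ => 1 / 2 := by
      simp only [ratePoly, hEnt_const_half]; rfl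
    rw [hhalf]
    refine subset_closure.trans' (subset_convexHull ℝ _ |>.trans' ?_)
    exact Set.subset_biUnion_of_mem (u := fun p => ratePoly s p)
      fun _ => ⟨by norm_num, by norm_num⟩

/-- Capacity region of the `s`-user Multiple Access Adder Channel: the closure
of the convex hull of the union over all product input distributions of the
corresponding rate polyhedra (Ulrey's characterization) equals the single
polyhedron cut out by the constraints `∑_{i ∈ A} R_i ≤ H_{|A|}(1/2)`. -/
theorem capacity_region_adder_channel (s : ℕ) (hs : 1 ≤ s) :
    closure (convexHull ℝ
        (⋃ p ∈ {p : Fin s → ℝ | ∀ i, p i ∈ Set.Icc (0 : ℝ) 1}, ratePoly s p)) =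
      {R : Fin s → ℝ | (∀ i, 0 ≤ R i) ∧
        ∀ A : Finset (Fin s), ∑ i ∈ A, R i ≤ binomEnt A.card (1 / 2)} :=
  capacity_region_adder_channel_general s
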